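/- Shannon entropy H (equivalently, negative entropy) is 1-strongly convex with respect to the ℓ¹ norm on the probability simplex: for p, q ∈ Δ^{M-1} and t ∈ [0,1], -H(tp+(1-t)q) ≤ t(-H(p)) + (1-t)(-H(q)) - (t(1-t)/2)‖p-q‖₁². -/

import Mathlib

def probSimplex (M : ℕ) : Set (Fin M → ℝ) :=
  {p | (∀ m, 0 ≤ p m) ∧ ∑ m, p m = 1}

noncomputable def negEntropy {M : ℕ} (p : Fin M → ℝ) : ℝ :=
  ∑ m, p m * Real.log (p m)

/-!
Write `r = t p + (1 - t) q`. Pointwise algebra gives the exact identity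
`t H(p) + (1 - t) H(q) - H(r) = t KL(p ‖ r) + (1 - t) KL(q ‖ r)` for the negative entropy `H`,
and `p - r = (1 - t)(p - q)`, `q - r = t (q - p)`. Pinsker's inequality
`KL(p ‖ r) ≥ ‖p - r‖₁² / 2` then bounds the right-hand side below by
`(t (1 - t)² + (1 - t) t²) ‖p - q‖₁² / 2 = t (1 - t) ‖p - q‖₁² / 2`.

Pinsker's inequality itself comes from the one-variable bound
`x log x - x + 1 ≥ 3 (x - 1)² / (2 x + 4)`, applied at `x = p i / r i` and summed, followed by
Cauchy–Schwarz against the weights `2 p i + 4 r i`, whose total is `6`.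
-/

open Real Finset InformationTheory

theorem isMinOn_of_hasDerivAt_of_sub_mul_nonneg {s : Set ℝ} (hs : Convex ℝ s) {f f' : ℝ → ℝ}
    {c : ℝ} (hf : ∀ y ∈ s, HasDerivAt f (f' y) y) (hf' : ∀ y ∈ s, 0 ≤ (y - c) * f' y)
    (hc : c ∈ s) : IsMinOn f s c := by
  intro x hx
  have hcont : ∀ {a b}, a ∈ s → b ∈ s → ContinuousOn f (Set.Icc a b) := fun ha hb y hy =>
    (hf y (hs.ordConnected.out ha hb hy)).continuousAt.continuousWithinAt
  have hderiv : ∀ {a b}, a ∈ s → b ∈ s → ∀ y ∈ interior (Set.Icc a b),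
      HasDerivWithinAt f (f' y) (interior (Set.Icc a b)) y := fun ha hb y hy =>
    (hf y (hs.ordConnected.out ha hb (interior_subset hy))).hasDerivWithinAt
  rcases le_total c x with hcx | hxc
  · refine monotoneOn_of_hasDerivWithinAt_nonneg (convex_Icc c x) (hcont hc hx) (hderiv hc hx)
      (fun y hy => ?_) (Set.left_mem_Icc.2 hcx) (Set.right_mem_Icc.2 hcx) hcx
    rw [interior_Icc] at hy
    exact nonneg_of_mul_nonneg_right
      (hf' y (hs.ordConnected.out hc hx (Set.Ioo_subset_Icc_self hy))) (sub_pos.2 hy.1)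
  · refine antitoneOn_of_hasDerivWithinAt_nonpos (convex_Icc x c) (hcont hx hc) (hderiv hx hc)
      (fun y hy => ?_) (Set.left_mem_Icc.2 hxc) (Set.right_mem_Icc.2 hxc) hxc
    rw [interior_Icc] at hy
    exact nonpos_of_mul_nonneg_right
      (hf' y (hs.ordConnected.out hx hc (Set.Ioo_subset_Icc_self hy))) (sub_neg.2 hy.2)

-- The logarithmic mean `(x - 1) / log x` is at most the arithmetic mean `(x + 1) / 2`.
theorem sub_one_mul_add_one_mul_log_sub_nonneg {x : ℝ} (hx : 0 < x) :
    0 ≤ (x - 1) * ((x + 1) * log x - 2 * (x - 1)) := by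
  set g : ℝ → ℝ := fun y => (y + 1) * log y - 2 * (y - 1)
  have hg : ∀ y ∈ Set.Ioi (0 : ℝ), HasDerivAt g (log y + (y + 1) * y⁻¹ - 2) y := fun y hy => by
    refine ((((hasDerivAt_id y).add_const 1).mul (hasDerivAt_log (ne_of_gt hy))).sub
      (((hasDerivAt_id y).sub_const 1).const_mul 2)).congr_deriv ?_
    simp only [id]
    ring
  have hmono : MonotoneOn g (Set.Ioi 0) := by
    refine monotoneOn_of_hasDerivWithinAt_nonneg (convex_Ioi 0)
      (fun y hy => (hg y hy).continuousAt.continuousWithinAt)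
      (fun y hy => (hg y (interior_subset hy)).hasDerivWithinAt) (fun y hy => ?_)
    rw [interior_Ioi] at hy
    have hlog := one_sub_inv_le_log_of_pos hy
    have : (y + 1) * y⁻¹ = 1 + y⁻¹ := by rw [add_mul, mul_inv_cancel₀ (ne_of_gt hy), one_mul]
    linarith
  have hg1 : g 1 = 0 := by simp [g]
  rcases le_total 1 x with h1 | h1
  · exact mul_nonneg (sub_nonneg.2 h1) (hg1 ▸ hmono (Set.mem_Ioi.2 one_pos) hx h1)
  · exact mul_nonneg_of_nonpos_of_nonpos (sub_nonpos.2 h1)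
      (hg1 ▸ hmono hx (Set.mem_Ioi.2 one_pos) h1)

theorem three_mul_sq_div_le_klFun {x : ℝ} (hx : 0 ≤ x) :
    3 * (x - 1) ^ 2 / (2 * x + 4) ≤ klFun x := by
  rcases hx.eq_or_lt with rfl | hx
  · norm_num [klFun_zero]
  set H : ℝ → ℝ := fun y => (2 * y + 4) * klFun y - 3 * (y - 1) ^ 2
  have hH : ∀ y ∈ Set.Ioi (0 : ℝ),
      HasDerivAt H (4 * ((y + 1) * log y - 2 * (y - 1))) y := fun y hy => by
    refine ((((hasDerivAt_id y).const_mul 2).add_const 4).mul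
      (hasDerivAt_klFun (ne_of_gt hy))).sub
      ((((hasDerivAt_id y).sub_const 1).pow 2).const_mul 3) |>.congr_deriv ?_
    simp only [id, klFun_apply]
    ring
  have hmin : H 1 ≤ H x := isMinOn_of_hasDerivAt_of_sub_mul_nonneg (convex_Ioi 0) hH
    (fun y hy => by nlinarith [sub_one_mul_add_one_mul_log_sub_nonneg (Set.mem_Ioi.1 hy)])
    (Set.mem_Ioi.2 one_pos) (Set.mem_Ioi.2 hx)
  norm_num [H, klFun_one] at hmin
  rw [div_le_iff₀ (by positivity)]
  nlinarith

theorem mul_klFun_div {p r : ℝ} (hr : 0 < r) :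
    r * klFun (p / r) = p * (log p - log r) - p + r := by
  rcases eq_or_ne p 0 with rfl | hp
  · simp [klFun_zero]
  rw [klFun_apply, log_div hp hr.ne']
  field_simp
  ring

theorem three_mul_sq_div_le_mul_log_sub {p r : ℝ} (hp : 0 ≤ p) (hr : 0 ≤ r)
    (hpr : r = 0 → p = 0) :
    3 * ((p - r) ^ 2 / (2 * p + 4 * r)) ≤ p * (log p - log r) - p + r := by
  rcases hr.eq_or_lt with rfl | hr
  · simp [hpr rfl]
  calc 3 * ((p - r) ^ 2 / (2 * p + 4 * r)) = r * (3 * (p / r - 1) ^ 2 / (2 * (p / r) + 4)) := by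
        field_simp
    _ ≤ r * klFun (p / r) := by gcongr; exact three_mul_sq_div_le_klFun (by positivity)
    _ = p * (log p - log r) - p + r := mul_klFun_div hr

-- Since `log 0 = 0`, this is a junk finite value unless `r i = 0 → p i = 0` for all `i`.
noncomputable def relEntropy {ι : Type*} [Fintype ι] (p r : ι → ℝ) : ℝ :=
  ∑ i, p i * (log (p i) - log (r i))

section Pinsker

variable {ι : Type*} [Fintype ι] {p r : ι → ℝ}

theorem sq_sum_abs_sub_le_six_mul_sum_sq_div (hp : ∀ i, 0 ≤ p i) (hr : ∀ i, 0 ≤ r i)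
    (hps : ∑ i, p i = 1) (hrs : ∑ i, r i = 1) :
    (∑ i, |p i - r i|) ^ 2 ≤ 6 * ∑ i, (p i - r i) ^ 2 / (2 * p i + 4 * r i) := by
  have hw : ∀ i, 0 ≤ 2 * p i + 4 * r i := fun i => by linarith [hp i, hr i]
  have hcs := sum_sq_le_sum_mul_sum_of_sq_le_mul univ (r := fun i => |p i - r i|)
    (fun i _ => div_nonneg (sq_nonneg (p i - r i)) (hw i)) (fun i _ => hw i) fun i _ => by
      rcases (hw i).eq_or_lt with h0 | h0
      · have : p i - r i = 0 := by linarith [hp i, hr i]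
        simp [this]
      · rw [sq_abs, div_mul_cancel₀ _ h0.ne']
  have hw6 : ∑ i, (2 * p i + 4 * r i) = 6 := by
    rw [sum_add_distrib, ← mul_sum, ← mul_sum, hps, hrs]
    norm_num
  rw [hw6] at hcs
  linarith

theorem three_mul_sum_sq_div_le_relEntropy (hp : ∀ i, 0 ≤ p i) (hr : ∀ i, 0 ≤ r i)
    (hps : ∑ i, p i = 1) (hrs : ∑ i, r i = 1) (hpr : ∀ i, r i = 0 → p i = 0) :
    3 * ∑ i, (p i - r i) ^ 2 / (2 * p i + 4 * r i) ≤ relEntropy p r :=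
  calc 3 * ∑ i, (p i - r i) ^ 2 / (2 * p i + 4 * r i)
      ≤ ∑ i, (p i * (log (p i) - log (r i)) - p i + r i) := by
        rw [mul_sum]
        exact sum_le_sum fun i _ => three_mul_sq_div_le_mul_log_sub (hp i) (hr i) (hpr i)
    _ = relEntropy p r := by
        rw [sum_add_distrib, sum_sub_distrib, hps, hrs, relEntropy]
        ring

theorem sq_sum_abs_sub_div_two_le_relEntropy (hp : ∀ i, 0 ≤ p i) (hr : ∀ i, 0 ≤ r i)
    (hps : ∑ i, p i = 1) (hrs : ∑ i, r i = 1) (hpr : ∀ i, r i = 0 → p i = 0) :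
    (∑ i, |p i - r i|) ^ 2 / 2 ≤ relEntropy p r := by
  linarith [sq_sum_abs_sub_le_six_mul_sum_sq_div hp hr hps hrs,
    three_mul_sum_sq_div_le_relEntropy hp hr hps hrs hpr]

end Pinsker

theorem mul_sq_sum_abs_sub_div_two_le_mul_relEntropy {ι : Type*} [Fintype ι] {p q : ι → ℝ}
    (hp : ∀ i, 0 ≤ p i) (hq : ∀ i, 0 ≤ q i) (hps : ∑ i, p i = 1) (hqs : ∑ i, q i = 1)
    {t : ℝ} (ht0 : 0 ≤ t) (ht1 : t ≤ 1) :
    t * (((1 - t) * ∑ i, |p i - q i|) ^ 2 / 2) ≤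
      t * relEntropy p (fun i => t * p i + (1 - t) * q i) := by
  rcases ht0.eq_or_lt with rfl | ht0
  · simp
  have hr : ∀ i, 0 ≤ t * p i + (1 - t) * q i := fun i =>
    add_nonneg (mul_nonneg ht0.le (hp i)) (mul_nonneg (sub_nonneg.2 ht1) (hq i))
  have hrs : ∑ i, (t * p i + (1 - t) * q i) = 1 := by
    rw [sum_add_distrib, ← mul_sum, ← mul_sum, hps, hqs]
    ring
  have hpr : ∀ i, t * p i + (1 - t) * q i = 0 → p i = 0 := fun i h =>
    (mul_eq_zero.1 ((add_eq_zero_iff_of_nonneg (mul_nonneg ht0.le (hp i))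
      (mul_nonneg (sub_nonneg.2 ht1) (hq i))).1 h).1).resolve_left ht0.ne'
  have hl1 : ∑ i, |p i - (t * p i + (1 - t) * q i)| = (1 - t) * ∑ i, |p i - q i| := by
    rw [mul_sum]
    refine sum_congr rfl fun i _ => ?_
    rw [show p i - (t * p i + (1 - t) * q i) = (1 - t) * (p i - q i) by ring, abs_mul,
      abs_of_nonneg (sub_nonneg.2 ht1)]
  gcongr
  exact hl1 ▸ sq_sum_abs_sub_div_two_le_relEntropy hp hr hps hrs hpr

theorem negEntropy_mix {M : ℕ} (p q : Fin M → ℝ) (t : ℝ) :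
    negEntropy (fun m => t * p m + (1 - t) * q m) =
      t * negEntropy p + (1 - t) * negEntropy q -
        (t * relEntropy p (fun m => t * p m + (1 - t) * q m) +
          (1 - t) * relEntropy q (fun m => t * p m + (1 - t) * q m)) := by
  simp only [negEntropy, relEntropy, mul_sum, ← sum_add_distrib, ← sum_sub_distrib]
  exact sum_congr rfl fun m _ => by ring

/-- negative entropy is 1-strongly convex w.r.t. the ℓ¹ norm on
the simplex (Pinsker-type strong convexity). -/
theorem negEntropy_one_strongly_convex_l1 (M : ℕ) :
    ∀ p ∈ probSimplex M, ∀ q ∈ probSimplex M, ∀ t : ℝ, t ∈ Set.Icc (0 : ℝ) 1 →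
      negEntropy (fun m => t * p m + (1 - t) * q m) ≤
        t * negEntropy p + (1 - t) * negEntropy q
          - t * (1 - t) / 2 * (∑ m, |p m - q m|) ^ 2 := by
  rintro p ⟨hp, hps⟩ q ⟨hq, hqs⟩ t ⟨ht0, ht1⟩
  have hP := mul_sq_sum_abs_sub_div_two_le_mul_relEntropy hp hq hps hqs ht0 ht1
  have hQ := mul_sq_sum_abs_sub_div_two_le_mul_relEntropy hq hp hqs hps
    (sub_nonneg.2 ht1) (sub_le_self 1 ht0)
  simp only [sub_sub_cancel, add_comm ((1 - t) * q _), abs_sub_comm (q _)] at hQ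
  rw [negEntropy_mix]
  linear_combination hP + hQ
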